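/- Let 0 < t and let ε, ε' : Fin 3 → ℝ be sign vectors (values in {-1,1}) differing in exactly two coordinates. Then -⟨P t ε, P t ε'⟩ / √(⟨P t ε, P t ε⟩ · ⟨P t ε', P t ε'⟩) = (3t² - 1)/(1 + t²). In particular, for 0 < t < 1 the twelve pairs of positive-octet hyperplanes of the deformed configuration that were tangent in the 24-cell now intersect, at the angle θ with cos θ = (3t² - 1)/(1 + t²) (Proposition 6.2). -/

import Mathlib

/-- The Minkowski inner product on `ℝ^{1,4}`, identified with `Fin 5 → ℝ`. -/
noncomputable def mink (v w : Fin 5 → ℝ) : ℝ :=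
  -(v 0 * w 0) + v 1 * w 1 + v 2 * w 2 + v 3 * w 3 + v 4 * w 4

/-- The positive octet space-like vectors of the deformed 24-cell (Table 6.1). -/
noncomputable def Pvec (t : ℝ) (ε : Fin 3 → ℝ) : Fin 5 → ℝ :=
  ![Real.sqrt 2, ε 0, ε 1, ε 2, (ε 0 * ε 1 * ε 2) / t]

/-- The negative octet space-like vectors of the deformed 24-cell (Table 6.1). -/
noncomputable def Nvec (t : ℝ) (ε : Fin 3 → ℝ) : Fin 5 → ℝ :=
  ![Real.sqrt 2, ε 0, ε 1, ε 2, -((ε 0 * ε 1 * ε 2) * t)]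

/-!
Writing `k` for the number of coordinates in which the sign vectors `ε, ε'` differ, the
products `ε i * ε' i` are `-1` exactly `k` times and `1` otherwise, so
`⟨P t ε, P t ε'⟩ = -2 + (3 - 2k) + (-1)^k / t² = 1 - 2k + (-1)^k / t²`.
With `k = 0` this gives `⟨P, P⟩ = 1 + 1/t²` for every `P`, and with `k = 2` it gives
`⟨P, P'⟩ = -3 + 1/t²`; the quotient is then `(3t² - 1)/(1 + t²)`.
-/

section Signs

variable {R : Type*} [CommRing R] [CharZero R]

lemma mul_eq_ite_of_sign [DecidableEq R] {a b : R} (ha : a = -1 ∨ a = 1)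
    (hb : b = -1 ∨ b = 1) :
    a * b = if a ≠ b then -1 else 1 := by
  rcases ha with rfl | rfl <;> rcases hb with rfl | rfl <;> norm_num

variable {ι : Type*} [Fintype ι] {ε ε' : ι → R}

lemma sum_mul_eq_card_sub_of_sign (hε : ∀ i, ε i = -1 ∨ ε i = 1)
    (hε' : ∀ i, ε' i = -1 ∨ ε' i = 1) :
    ∑ i, ε i * ε' i = Fintype.card ι - 2 * Nat.card {i // ε i ≠ ε' i} := by
  classical
  have hterm : ∀ i, ε i * ε' i = 1 - 2 * if ε i ≠ ε' i then 1 else 0 := fun i => by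
    rw [mul_eq_ite_of_sign (hε i) (hε' i)]
    split_ifs <;> norm_num
  simp only [hterm, Finset.sum_sub_distrib, ← Finset.mul_sum, Finset.sum_boole,
    Nat.card_eq_fintype_card, Fintype.card_subtype, Finset.sum_const, Finset.card_univ,
    nsmul_eq_mul, mul_one]

lemma prod_mul_eq_neg_one_pow_of_sign (hε : ∀ i, ε i = -1 ∨ ε i = 1)
    (hε' : ∀ i, ε' i = -1 ∨ ε' i = 1) :
    ∏ i, ε i * ε' i = (-1) ^ Nat.card {i // ε i ≠ ε' i} := by
  classical
  simp only [fun i => mul_eq_ite_of_sign (hε i) (hε' i), Finset.prod_ite, Finset.prod_const,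
    one_pow, mul_one, Nat.card_eq_fintype_card, Fintype.card_subtype]

end Signs

lemma mink_Pvec (t : ℝ) (ε ε' : Fin 3 → ℝ) :
    mink (Pvec t ε) (Pvec t ε') = -2 + ∑ i, ε i * ε' i + (∏ i, ε i * ε' i) / t ^ 2 := by
  simp only [mink, Pvec, Fin.sum_univ_three, Fin.prod_univ_three, Matrix.cons_val_zero,
    Matrix.cons_val_one, Matrix.cons_val_two, Matrix.cons_val_three, Matrix.cons_val_four,
    Matrix.head_cons, Matrix.tail_cons, Real.mul_self_sqrt zero_le_two]
  ring

lemma mink_Pvec_of_sign (t : ℝ) {ε ε' : Fin 3 → ℝ} (hε : ∀ i, ε i = -1 ∨ ε i = 1)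
    (hε' : ∀ i, ε' i = -1 ∨ ε' i = 1) :
    mink (Pvec t ε) (Pvec t ε') =
      1 - 2 * Nat.card {i // ε i ≠ ε' i} + (-1) ^ Nat.card {i // ε i ≠ ε' i} / t ^ 2 := by
  rw [mink_Pvec, sum_mul_eq_card_sub_of_sign hε hε', prod_mul_eq_neg_one_pow_of_sign hε hε',
    Fintype.card_fin]
  ring

lemma mink_Pvec_self_of_sign (t : ℝ) {ε : Fin 3 → ℝ} (hε : ∀ i, ε i = -1 ∨ ε i = 1) :
    mink (Pvec t ε) (Pvec t ε) = 1 + 1 / t ^ 2 := by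
  simp [mink_Pvec_of_sign t hε hε]

theorem positive_pair_angle (t : ℝ) (ht : 0 < t)
    (ε ε' : Fin 3 → ℝ) (hε : ∀ i, ε i = -1 ∨ ε i = 1) (hε' : ∀ i, ε' i = -1 ∨ ε' i = 1)
    (hd : Nat.card {i : Fin 3 // ε i ≠ ε' i} = 2) :
    -mink (Pvec t ε) (Pvec t ε') /
      Real.sqrt (mink (Pvec t ε) (Pvec t ε) * mink (Pvec t ε') (Pvec t ε')) =
      (3 * t ^ 2 - 1) / (1 + t ^ 2) := by
  rw [mink_Pvec_of_sign t hε hε', hd, mink_Pvec_self_of_sign t hε,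
    mink_Pvec_self_of_sign t hε', Real.sqrt_mul_self (by positivity)]
  field_simp
  ring
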